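/- Let g : ℝ² → ℝ, let k ≥ 1, and for each index j = 1,…,k let a_j, b_j, c_j be natural numbers with ∑_{j=1}^k c_j·((a_j : ℤ) − (b_j : ℤ)) = 0, such that each (x,y) ↦ (x+iy)^{a_j} (x−iy)^{b_j} g(x,y) is integrable. Let ψ ∈ ℝ and g'(p) = g(R_{−ψ} p). Then the phase-cancelled product of complex moments is rotation invariant: ∏_{j=1}^k C_{a_j b_j}(g')^{c_j} = ∏_{j=1}^k C_{a_j b_j}(g)^{c_j}. -/

import Mathlib

/-!
In the coordinate `z = x + iy` the rotation `R_ψ` is `z ↦ e^{iψ} z` and preserves Lebesgue measure,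
so substituting `z = e^{iψ} w` in the moment of the rotated density gives
`C_{ab}(g') = e^{i(a-b)ψ} C_{ab}(g)`. In the product the phases multiply to
`e^{iψ ∑ c_j (a_j - b_j)} = 1`.
-/

open MeasureTheory Complex

noncomputable def complexMoment (a b : ℕ) (g : ℝ × ℝ → ℝ) : ℂ :=
  ∫ p : ℝ × ℝ, ((p.1 : ℂ) + I * p.2) ^ a * ((p.1 : ℂ) - I * p.2) ^ b * (g p : ℂ)

noncomputable def planeRotation (ψ : ℝ) : (ℝ × ℝ) ≃ᵐ (ℝ × ℝ) :=
  measurableEquivRealProd.symm.trans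
    ((rotation (Circle.exp ψ)).toHomeomorph.toMeasurableEquiv.trans measurableEquivRealProd)

lemma planeRotation_apply (ψ : ℝ) (p : ℝ × ℝ) :
    planeRotation ψ p =
      (p.1 * Real.cos ψ - p.2 * Real.sin ψ, p.1 * Real.sin ψ + p.2 * Real.cos ψ) := by
  change measurableEquivRealProd (rotation (Circle.exp ψ) (measurableEquivRealProd.symm p)) = _
  simp only [measurableEquivRealProd_symm_apply, measurableEquivRealProd_apply, rotation_apply,
    Circle.coe_exp, exp_mul_I, Prod.mk.injEq]
  constructor <;>
    simp only [mul_re, mul_im, add_re, add_im, cos_ofReal_re, cos_ofReal_im, sin_ofReal_re,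
      sin_ofReal_im, I_re, I_im] <;> ring

lemma planeRotation_neg_apply_planeRotation (ψ : ℝ) (p : ℝ × ℝ) :
    planeRotation (-ψ) (planeRotation ψ p) = p := by
  simp only [planeRotation_apply, Real.cos_neg, Real.sin_neg]
  ext
  · linear_combination p.1 * Real.sin_sq_add_cos_sq ψ
  · linear_combination p.2 * Real.sin_sq_add_cos_sq ψ

lemma measurePreserving_planeRotation (ψ : ℝ) :
    MeasurePreserving (planeRotation ψ) volume volume :=
  (volume_preserving_equiv_real_prod.comp (rotation (Circle.exp ψ)).measurePreserving).comp
    (volume_preserving_equiv_real_prod.symm _)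

lemma ofReal_add_I_mul_planeRotation (ψ : ℝ) (p : ℝ × ℝ) :
    ((planeRotation ψ p).1 : ℂ) + I * (planeRotation ψ p).2 = cexp (ψ * I) * (p.1 + I * p.2) := by
  rw [planeRotation_apply, exp_mul_I]
  push_cast
  linear_combination (-(p.2 : ℂ) * sin ψ) * I_sq

lemma ofReal_sub_I_mul_planeRotation (ψ : ℝ) (p : ℝ × ℝ) :
    ((planeRotation ψ p).1 : ℂ) - I * (planeRotation ψ p).2 =
      cexp (-ψ * I) * (p.1 - I * p.2) := by
  rw [planeRotation_apply, ← ofReal_neg, exp_mul_I]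
  push_cast
  rw [cos_neg, sin_neg]
  linear_combination (-(p.2 : ℂ) * sin ψ) * I_sq

theorem complexMoment_comp_planeRotation_neg (a b : ℕ) (g : ℝ × ℝ → ℝ) (ψ : ℝ) :
    complexMoment a b (g ∘ planeRotation (-ψ)) =
      cexp (((a : ℂ) - b) * ψ * I) * complexMoment a b g := by
  have phase : cexp (ψ * I) ^ a * cexp (-ψ * I) ^ b = cexp (((a : ℂ) - b) * ψ * I) := by
    rw [← exp_nat_mul, ← exp_nat_mul, ← exp_add]
    ring_nf
  rw [complexMoment, complexMoment, ← (measurePreserving_planeRotation ψ).integral_comp',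
    ← integral_const_mul]
  congr 1 with p
  rw [Function.comp_apply, planeRotation_neg_apply_planeRotation,
    ofReal_add_I_mul_planeRotation, ofReal_sub_I_mul_planeRotation, mul_pow, mul_pow, ← phase]
  ring

lemma prod_exp_phase_pow_eq_one {ι : Type*} (s : Finset ι) (a b c : ι → ℕ) (ψ : ℝ)
    (hsum : ∑ j ∈ s, (c j : ℤ) * ((a j : ℤ) - (b j : ℤ)) = 0) :
    ∏ j ∈ s, cexp (((a j : ℂ) - b j) * ψ * I) ^ c j = 1 := by
  have hsumℂ : ∑ j ∈ s, (c j : ℂ) * ((a j : ℂ) - b j) = 0 := by exact_mod_cast hsum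
  simp_rw [← exp_nat_mul, ← exp_sum, ← mul_assoc, ← Finset.sum_mul, hsumℂ, zero_mul, exp_zero]

theorem phaseCancelledProduct_rotation_invariant_general (g : ℝ × ℝ → ℝ)
    (k : ℕ) (a b c : Fin k → ℕ)
    (hsum : ∑ j : Fin k, (c j : ℤ) * ((a j : ℤ) - (b j : ℤ)) = 0)
    (ψ : ℝ) (g' : ℝ × ℝ → ℝ)
    (hg' : ∀ p : ℝ × ℝ, g' p =
      g (p.1 * Real.cos ψ + p.2 * Real.sin ψ, -p.1 * Real.sin ψ + p.2 * Real.cos ψ)) :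
    (∏ j : Fin k, (∫ p : ℝ × ℝ,
        ((p.1 : ℂ) + Complex.I * p.2) ^ (a j) * ((p.1 : ℂ) - Complex.I * p.2) ^ (b j) *
          (g' p : ℂ)) ^ (c j))
      = ∏ j : Fin k, (∫ p : ℝ × ℝ,
          ((p.1 : ℂ) + Complex.I * p.2) ^ (a j) * ((p.1 : ℂ) - Complex.I * p.2) ^ (b j) *
            (g p : ℂ)) ^ (c j) := by
  have hg'_eq : g' = g ∘ planeRotation (-ψ) := by
    ext p
    rw [hg', Function.comp_apply, planeRotation_apply, Real.cos_neg, Real.sin_neg]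
    congr 2 <;> ring
  change ∏ j, complexMoment (a j) (b j) g' ^ c j = ∏ j, complexMoment (a j) (b j) g ^ c j
  simp only [hg'_eq, complexMoment_comp_planeRotation_neg, mul_pow, Finset.prod_mul_distrib,
    prod_exp_phase_pow_eq_one _ a b c ψ hsum, one_mul]

/-- A phase-cancelled product of complex moments is invariant under rotation. -/
theorem phaseCancelledProduct_rotation_invariant (g : ℝ × ℝ → ℝ)
    (k : ℕ) (hk : 1 ≤ k) (a b c : Fin k → ℕ)
    (hsum : ∑ j : Fin k, (c j : ℤ) * ((a j : ℤ) - (b j : ℤ)) = 0)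
    (hint : ∀ j : Fin k, Integrable (fun p : ℝ × ℝ =>
      ((p.1 : ℂ) + Complex.I * p.2) ^ (a j) * ((p.1 : ℂ) - Complex.I * p.2) ^ (b j) * (g p : ℂ)))
    (ψ : ℝ) (g' : ℝ × ℝ → ℝ)
    (hg' : ∀ p : ℝ × ℝ, g' p =
      g (p.1 * Real.cos ψ + p.2 * Real.sin ψ, -p.1 * Real.sin ψ + p.2 * Real.cos ψ)) :
    (∏ j : Fin k, (∫ p : ℝ × ℝ,
        ((p.1 : ℂ) + Complex.I * p.2) ^ (a j) * ((p.1 : ℂ) - Complex.I * p.2) ^ (b j) *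
          (g' p : ℂ)) ^ (c j))
      = ∏ j : Fin k, (∫ p : ℝ × ℝ,
          ((p.1 : ℂ) + Complex.I * p.2) ^ (a j) * ((p.1 : ℂ) - Complex.I * p.2) ^ (b j) *
            (g p : ℂ)) ^ (c j) :=
  phaseCancelledProduct_rotation_invariant_general g k a b c hsum ψ g' hg'
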